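/- Let c be a random cluster drawn from the true clustering 𝒞 with probability proportional to positive weights p_c. Then the b-cubed precision satisfies P_{B³} = E[(1 − ROCE(c))/p_c] / E[1/p_c]. -/

import Mathlib

open Finset Filter Topology

/-- A clustering (partition) of a finite type of records, given by the block
containing each record. -/
structure Clustering (R : Type*) [Fintype R] [DecidableEq R] where
  blk : R → Finset R
  mem_blk : ∀ r, r ∈ blk r
  blk_eq : ∀ r r', r' ∈ blk r → blk r' = blk r

namespace Clustering

variable {R : Type*} [Fintype R] [DecidableEq R]

/-- The set of clusters (blocks) of the clustering. -/
def clusters (C : Clustering R) : Finset (Finset R) :=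
  Finset.univ.image C.blk

/-- The set of unordered pairs of distinct records lying in the same block. -/
def pairs (C : Clustering R) : Set (Sym2 R) :=
  {s | ¬ s.IsDiag ∧ ∀ a b : R, s = s(a, b) → a ∈ C.blk b}

/-- Expectation of `f (c)` when a random cluster `c` is drawn from `C.clusters`
with probability proportional to the positive weights `p`. -/
noncomputable def expect (C : Clustering R) (p : Finset R → ℝ) (f : Finset R → ℝ) : ℝ :=
  ∑ c ∈ C.clusters, (p c / ∑ c' ∈ C.clusters, p c') * f c

end Clustering

section Metrics

variable {R : Type*} [Fintype R] [DecidableEq R]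

/-- Record-wise underclustering error `UCE(r) = |c(r) \ ĉ(r)|`. -/
noncomputable def UCE (C Ch : Clustering R) (r : R) : ℝ := ((C.blk r) \ (Ch.blk r)).card

/-- Record-wise overclustering error `OCE(r) = |ĉ(r) \ c(r)|`. -/
noncomputable def OCE (C Ch : Clustering R) (r : R) : ℝ := ((Ch.blk r) \ (C.blk r)).card

/-- Record-wise size difference error `SDE(r) = |ĉ(r)| - |c(r)|`. -/
noncomputable def SDE (C Ch : Clustering R) (r : R) : ℝ :=
  ((Ch.blk r).card : ℝ) - ((C.blk r).card : ℝ)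

/-- Record-wise relative overclustering error. -/
noncomputable def ROCE (C Ch : Clustering R) (r : R) : ℝ := OCE C Ch r / ((Ch.blk r).card : ℝ)

/-- Record-wise relative underclustering error. -/
noncomputable def RUCE (C Ch : Clustering R) (r : R) : ℝ := UCE C Ch r / ((C.blk r).card : ℝ)

/-- Record-wise error indicator. -/
noncomputable def EI (C Ch : Clustering R) (r : R) : ℝ := if Ch.blk r = C.blk r then 0 else 1

/-- Cluster-wise average of a record-wise error metric:
`E(c) = (1/|c|) ∑_{r ∈ c} E(r)`. -/
noncomputable def clAvg (E : R → ℝ) (c : Finset R) : ℝ := (1 / (c.card : ℝ)) * ∑ r ∈ c, E r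

end Metrics

/-! Reweighting a cluster drawn with probability proportional to `p c` by `1 / p c` makes it
uniform, so the ratio of expectations is the plain average of `1 - ROCE(c)` over clusters; and
`1 - ROCE(r) = |c(r) ∩ ĉ(r)| / |ĉ(r)|` is exactly the b-cubed precision of the record `r`. -/

namespace Clustering

variable {R : Type*} [Fintype R] [DecidableEq R]

lemma nonempty_of_mem_clusters (C : Clustering R) {c : Finset R} (hc : c ∈ C.clusters) :
    c.Nonempty := by
  obtain ⟨r, -, rfl⟩ := Finset.mem_image.mp hc
  exact ⟨r, C.mem_blk r⟩

lemma expect_div_weight (C : Clustering R) {p : Finset R → ℝ}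
    (hp : ∀ c ∈ C.clusters, p c ≠ 0) (f : Finset R → ℝ) :
    C.expect p (fun c => f c / p c) = (∑ c ∈ C.clusters, f c) / ∑ c ∈ C.clusters, p c := by
  rw [expect, Finset.sum_div]
  refine Finset.sum_congr rfl fun c hc => ?_
  field_simp [hp c hc]

end Clustering

lemma one_sub_clAvg {R : Type*} (E : R → ℝ) {c : Finset R} (hc : c.Nonempty) :
    1 - clAvg E c = clAvg (fun r => 1 - E r) c := by
  have hcard : (c.card : ℝ) ≠ 0 := by exact_mod_cast hc.card_pos.ne'
  rw [clAvg, clAvg, Finset.sum_sub_distrib, Finset.sum_const, nsmul_one]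
  field_simp

lemma one_sub_ROCE {R : Type*} [Fintype R] [DecidableEq R]
    (C Ch : Clustering R) (r : R) :
    1 - ROCE C Ch r = ((C.blk r ∩ Ch.blk r).card : ℝ) / ((Ch.blk r).card : ℝ) := by
  have hne : ((Ch.blk r).card : ℝ) ≠ 0 := by
    exact_mod_cast (Finset.card_pos.mpr ⟨r, Ch.mem_blk r⟩).ne'
  have hsplit := Finset.card_sdiff_add_card_inter (Ch.blk r) (C.blk r)
  rw [ROCE, OCE, Finset.inter_comm, eq_div_iff hne, sub_mul, div_mul_cancel₀ _ hne, one_mul,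
    ← hsplit]
  push_cast
  ring

/-- Lemma 4 (b-cubed precision part). -/
theorem bcubed_precision_representation
    {R : Type*} [Fintype R] [DecidableEq R]
    (C Ch : Clustering R) (p : Finset R → ℝ)
    (hp : ∀ c ∈ C.clusters, 0 < p c) :
    (1 / (C.clusters.card : ℝ)) *
        ∑ c ∈ C.clusters, (1 / (c.card : ℝ)) *
          ∑ r ∈ c, ((C.blk r ∩ Ch.blk r).card : ℝ) / ((Ch.blk r).card : ℝ) =
      C.expect p (fun c => (1 - clAvg (ROCE C Ch) c) / p c) /
        C.expect p (fun c => 1 / p c) := by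
  rcases Finset.eq_empty_or_nonempty C.clusters with hempty | hne
  · simp [hempty, Clustering.expect]
  have hp_ne : ∀ c ∈ C.clusters, p c ≠ 0 := fun c hc => (hp c hc).ne'
  have hS : ∑ c ∈ C.clusters, p c ≠ 0 := (Finset.sum_pos hp hne).ne'
  have hprecision : ∀ c ∈ C.clusters, 1 - clAvg (ROCE C Ch) c =
      (1 / (c.card : ℝ)) * ∑ r ∈ c, ((C.blk r ∩ Ch.blk r).card : ℝ) / ((Ch.blk r).card : ℝ) := by
    intro c hc
    rw [one_sub_clAvg _ (C.nonempty_of_mem_clusters hc), clAvg]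
    simp only [one_sub_ROCE]
  rw [C.expect_div_weight hp_ne, C.expect_div_weight hp_ne (fun _ => 1),
    div_div_div_cancel_right₀ hS, Finset.sum_const, nsmul_one, Finset.sum_congr rfl hprecision,
    one_div_mul_eq_div]
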